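/- The McCormick relaxation of a bilinear term over a box equals the convex hull: the set {(x, y, w) ∈ ℝ³ : x^l ≤ x ≤ x^u, y^l ≤ y ≤ y^u, and the four McCormick inequalities hold} is equal to the convex hull of the graph {(x, y, xy) : x^l ≤ x ≤ x^u, y^l ≤ y ≤ y^u}. -/
import Mathlib

theorem mccormick_convex_hull (xl xu yl yu : ℝ) (hx : xl < xu) (hy : yl < yu) :
    {v : ℝ × ℝ × ℝ | xl ≤ v.1 ∧ v.1 ≤ xu ∧ yl ≤ v.2.1 ∧ v.2.1 ≤ yu ∧
      v.2.2 ≥ xl * v.2.1 + yl * v.1 - xl * yl ∧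
      v.2.2 ≥ xu * v.2.1 + yu * v.1 - xu * yu ∧
      v.2.2 ≤ xl * v.2.1 + yu * v.1 - xl * yu ∧
      v.2.2 ≤ xu * v.2.1 + yl * v.1 - xu * yl} =
    convexHull ℝ {v : ℝ × ℝ × ℝ | xl ≤ v.1 ∧ v.1 ≤ xu ∧ yl ≤ v.2.1 ∧
      v.2.1 ≤ yu ∧ v.2.2 = v.1 * v.2.1} := by
  set S : Set (ℝ × ℝ × ℝ) := {v : ℝ × ℝ × ℝ | xl ≤ v.1 ∧ v.1 ≤ xu ∧ yl ≤ v.2.1 ∧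
      v.2.1 ≤ yu ∧ v.2.2 = v.1 * v.2.1} with hS
  apply Set.Subset.antisymm
  · rintro ⟨x, y, w⟩ ⟨h1, h2, h3, h4, h5, h6, h7, h8⟩
    simp only [Set.mem_setOf_eq] at h1 h2 h3 h4 h5 h6 h7 h8 ⊢
    set D := (xu - xl) * (yu - yl) with hD
    have hDpos : 0 < D := mul_pos (by linarith) (by linarith)
    have hDne : D ≠ 0 := ne_of_gt hDpos
    classical
    set pts : Fin 4 → ℝ × ℝ × ℝ :=
      ![(xl, yl, xl * yl), (xl, yu, xl * yu), (xu, yl, xu * yl), (xu, yu, xu * yu)] with hpts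
    set cf : Fin 4 → ℝ :=
      ![(w - (xu * y + yu * x - xu * yu)) / D,
        ((xu * y + yl * x - xu * yl) - w) / D,
        ((xl * y + yu * x - xl * yu) - w) / D,
        (w - (xl * y + yl * x - xl * yl)) / D] with hcf
    have hnonneg : ∀ i ∈ Finset.univ, (0:ℝ) ≤ cf i := by
      intro i _
      fin_cases i <;>
        simp only [hcf, Matrix.cons_val_zero, Matrix.cons_val_one, Matrix.head_cons,
          Matrix.cons_val_two, Matrix.tail_cons, Matrix.cons_val_three] <;>
        apply div_nonneg _ (le_of_lt hDpos) <;> linarith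
    have hsum : ∑ i, cf i = 1 := by
      simp only [hcf, Fin.sum_univ_four, Matrix.cons_val_zero, Matrix.cons_val_one,
        Matrix.head_cons, Matrix.cons_val_two, Matrix.tail_cons, Matrix.cons_val_three]
      field_simp
      ring
    have hmem : ∀ i ∈ Finset.univ, pts i ∈ S := by
      intro i _
      fin_cases i
      · exact ⟨le_refl _, hx.le, le_refl _, hy.le, rfl⟩
      · exact ⟨le_refl _, hx.le, hy.le, le_refl _, rfl⟩
      · exact ⟨hx.le, le_refl _, le_refl _, hy.le, rfl⟩
      · exact ⟨hx.le, le_refl _, hy.le, le_refl _, rfl⟩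
    have key := (convex_convexHull ℝ S).sum_mem hnonneg hsum
      (fun i hi => subset_convexHull ℝ S (hmem i hi))
    have heq : ((x, y, w) : ℝ × ℝ × ℝ) = ∑ i, cf i • pts i := by
      simp only [hcf, hpts, Fin.sum_univ_four, Matrix.cons_val_zero, Matrix.cons_val_one,
        Matrix.head_cons, Matrix.cons_val_two, Matrix.tail_cons, Matrix.cons_val_three,
        Prod.smul_mk, smul_eq_mul, Prod.mk_add_mk, Prod.mk.injEq]
      refine ⟨?_, ?_, ?_⟩ <;> (field_simp; ring)
    rw [heq]
    exact key
  · apply convexHull_min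
    · rintro ⟨x, y, w⟩ ⟨h1, h2, h3, h4, h5⟩
      simp only [Set.mem_setOf_eq] at *
      subst h5
      refine ⟨h1, h2, h3, h4, ?_, ?_, ?_, ?_⟩ <;>
        nlinarith [mul_nonneg (sub_nonneg.2 h1) (sub_nonneg.2 h3),
          mul_nonneg (sub_nonneg.2 h2) (sub_nonneg.2 h4),
          mul_nonneg (sub_nonneg.2 h1) (sub_nonneg.2 h4),
          mul_nonneg (sub_nonneg.2 h2) (sub_nonneg.2 h3)]
    · rintro ⟨px, py, pw⟩ hp ⟨qx, qy, qw⟩ hq a b ha hb hab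
      obtain ⟨p1, p2, p3, p4, p5, p6, p7, p8⟩ := hp
      obtain ⟨q1, q2, q3, q4, q5, q6, q7, q8⟩ := hq
      simp only [Set.mem_setOf_eq, Prod.smul_mk, smul_eq_mul, Prod.mk_add_mk] at *
      obtain rfl : b = 1 - a := by linarith
      refine ⟨?_, ?_, ?_, ?_, ?_, ?_, ?_, ?_⟩ <;>
        linarith [mul_le_mul_of_nonneg_left p1 ha, mul_le_mul_of_nonneg_left q1 hb,
          mul_le_mul_of_nonneg_left p2 ha, mul_le_mul_of_nonneg_left q2 hb,
          mul_le_mul_of_nonneg_left p3 ha, mul_le_mul_of_nonneg_left q3 hb,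
          mul_le_mul_of_nonneg_left p4 ha, mul_le_mul_of_nonneg_left q4 hb,
          mul_le_mul_of_nonneg_left p5 ha, mul_le_mul_of_nonneg_left q5 hb,
          mul_le_mul_of_nonneg_left p6 ha, mul_le_mul_of_nonneg_left q6 hb,
          mul_le_mul_of_nonneg_left p7 ha, mul_le_mul_of_nonneg_left q7 hb,
          mul_le_mul_of_nonneg_left p8 ha, mul_le_mul_of_nonneg_left q8 hb]
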